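/- arXiv:1503.06446 — 3 statements merged into one kernel-verified Lean document; each statement's English description precedes it below -/
import Mathlib

section
/- Suppose smooth functions κ, τ, λ, γ on ℝ² satisfy the matrix compatibility condition U_v − V_u + UV − VU = 0, where U is the 3×3 matrix with rows (0, −κ, 0), (−κ, 0, −τ), (0, −τ, 0) and V has rows (0, −λτ, λ_u), (−λτ, 0, γ), (−λ_u, γ, 0). Then κ_v = λτ_u + 2λ_u τ, τ_v = −λ_u κ − γ_u, and λ_uu = −λτ² − κγ. -/
/-- Partial derivative with respect to the first variable. -/
noncomputable def pu (f : ℝ → ℝ → ℝ) : ℝ → ℝ → ℝ := fun u v => deriv (fun x => f x v) u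

/-- Partial derivative with respect to the second variable. -/
noncomputable def pv (f : ℝ → ℝ → ℝ) : ℝ → ℝ → ℝ := fun u v => deriv (fun y => f u y) v

lemma diffu {f : ℝ → ℝ → ℝ} (hf : ContDiff ℝ (⊤ : ℕ∞) (Function.uncurry f)) (u v : ℝ) :
    DifferentiableAt ℝ (fun x => f x v) u := by
  have : Differentiable ℝ fun x : ℝ => Function.uncurry f (x, v) :=
    (hf.differentiable (by simp)).comp (differentiable_id.prodMk (differentiable_const v))
  simpa [Function.uncurry] using this.differentiableAt

/-- Gauss–Mainardi–Codazzi equations for Case 1 Razzaboni surfaces in Minkowski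
3-space, obtained from the zero-curvature condition U_v - V_u + UV - VU = 0. -/
theorem razzaboni_case1_GMC (κ τ lam γ : ℝ → ℝ → ℝ)
    (hκ : ContDiff ℝ (⊤ : ℕ∞) (Function.uncurry κ))
    (hτ : ContDiff ℝ (⊤ : ℕ∞) (Function.uncurry τ))
    (hlam : ContDiff ℝ (⊤ : ℕ∞) (Function.uncurry lam))
    (hγ : ContDiff ℝ (⊤ : ℕ∞) (Function.uncurry γ))
    (U V : ℝ → ℝ → Matrix (Fin 3) (Fin 3) ℝ)
    (hU : ∀ u v, U u v = !![0, -κ u v, 0; -κ u v, 0, -τ u v; 0, -τ u v, 0])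
    (hV : ∀ u v, V u v =
      !![0, -(lam u v * τ u v), pu lam u v;
         -(lam u v * τ u v), 0, γ u v;
         -(pu lam u v), γ u v, 0])
    (hZC : ∀ u v, ∀ i j : Fin 3,
      deriv (fun y => U u y i j) v - deriv (fun x => V x v i j) u +
        ((U u v * V u v) i j - (V u v * U u v) i j) = 0) :
    ∀ u v, pv κ u v = lam u v * pu τ u v + 2 * pu lam u v * τ u v ∧
      pv τ u v = -(pu lam u v * κ u v) - pu γ u v ∧
      pu (pu lam) u v = -(lam u v * (τ u v) ^ 2) - κ u v * γ u v := by
  intro u v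
  have h01 := hZC u v 0 1
  have h12 := hZC u v 1 2
  have h02 := hZC u v 0 2
  simp only [hU, hV] at h01 h12 h02
  simp [Matrix.mul_apply, Fin.sum_univ_three] at h01 h12 h02
  have dm : deriv (fun y => lam y v * τ y v) u = pu lam u v * τ u v + lam u v * pu τ u v := by
    rw [deriv_fun_mul (diffu hlam u v) (diffu hτ u v)]; rfl
  have dκ : deriv (κ u) v = pv κ u v := rfl
  have dτ : deriv (τ u) v = pv τ u v := rfl
  have dγ : deriv (fun x => γ x v) u = pu γ u v := rfl
  have dpl : deriv (fun x => pu lam x v) u = pu (pu lam) u v := rfl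
  rw [dm, dκ] at h01
  rw [dτ, dγ] at h12
  rw [dpl] at h02
  refine ⟨by linarith, by linarith, by nlinarith [sq_nonneg (τ u v)]⟩
end

section
/- Suppose smooth functions κ, τ, λ, γ on ℝ² satisfy the zero-curvature condition U_v − V_u + UV − VU = 0, where U has rows (0, κ, 0), (−κ, 0, τ), (0, τ, 0) and V has rows (0, λτ, λ_u), (−λτ, 0, γ), (λ_u, γ, 0). Then κ_v = λτ_u + 2λ_u τ, τ_v = λ_u κ + γ_u, and λ_uu = −λτ² + κγ. -/
lemma slice1_diff (f : ℝ → ℝ → ℝ) (hf : ContDiff ℝ (⊤ : ℕ∞) (Function.uncurry f)) (v : ℝ) :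
    Differentiable ℝ (fun x => f x v) :=
  (hf.differentiable (by simp)).comp (differentiable_id.prodMk (differentiable_const v))

/-- Gauss–Mainardi–Codazzi equations for Case 2 Razzaboni surfaces in Minkowski
3-space, obtained from the zero-curvature condition U_v - V_u + UV - VU = 0. -/
theorem razzaboni_case2_GMC (κ τ lam γ : ℝ → ℝ → ℝ)
    (hκ : ContDiff ℝ (⊤ : ℕ∞) (Function.uncurry κ))
    (hτ : ContDiff ℝ (⊤ : ℕ∞) (Function.uncurry τ))
    (hlam : ContDiff ℝ (⊤ : ℕ∞) (Function.uncurry lam))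
    (hγ : ContDiff ℝ (⊤ : ℕ∞) (Function.uncurry γ))
    (U V : ℝ → ℝ → Matrix (Fin 3) (Fin 3) ℝ)
    (hU : ∀ u v, U u v = !![0, κ u v, 0; -κ u v, 0, τ u v; 0, τ u v, 0])
    (hV : ∀ u v, V u v =
      !![0, lam u v * τ u v, pu lam u v;
         -(lam u v * τ u v), 0, γ u v;
         pu lam u v, γ u v, 0])
    (hZC : ∀ u v, ∀ i j : Fin 3,
      deriv (fun y => U u y i j) v - deriv (fun x => V x v i j) u +
        ((U u v * V u v) i j - (V u v * U u v) i j) = 0) :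
    ∀ u v, pv κ u v = lam u v * pu τ u v + 2 * pu lam u v * τ u v ∧
      pv τ u v = pu lam u v * κ u v + pu γ u v ∧
      pu (pu lam) u v = -(lam u v * (τ u v) ^ 2) + κ u v * γ u v := by
  intro u v
  have dlam : DifferentiableAt ℝ (fun x => lam x v) u := slice1_diff lam hlam v u
  have dτ : DifferentiableAt ℝ (fun x => τ x v) u := slice1_diff τ hτ v u
  have h01 := hZC u v 0 1
  have h12 := hZC u v 1 2
  have h02 := hZC u v 0 2
  simp only [hU, hV, Matrix.mul_fin_three, Matrix.cons_val', Matrix.cons_val_zero,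
    Matrix.cons_val_one, Matrix.head_cons, Matrix.empty_val', Matrix.cons_val_fin_one,
    Matrix.head_fin_const, Matrix.of_apply, Matrix.cons_val_two, Matrix.tail_cons] at h01 h12 h02
  rw [deriv_fun_mul dlam dτ] at h01
  simp only [deriv_const'] at h02
  simp only [pu, pv] at *
  constructor
  · nlinarith [h01]
  constructor
  · nlinarith [h12]
  · nlinarith [h02]
end

section
/- Let θ(u,v) be smooth with θ_u ≠ 0. Set κ = θ_u, λ = −θ_v/2, and γ = (λ_uu − λ)/κ, so that λ_uu = λ + κγ. Then the system κ_v = −2λ_u, γ_u + κλ_u = 0, λ_uu = λ + κγ is equivalent to the single equation ((θ_vuu − θ_v)/θ_u)_u + θ_u θ_vu = 0, in the sense that κ_v = −2λ_u holds automatically and the equation γ_u + κλ_u = 0 is exactly ((θ_vuu − θ_v)/θ_u)_u + θ_u θ_vu = 0 up to a factor of −1/2. -/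
lemma pu_eq_fderiv (f : ℝ → ℝ → ℝ) (hf : Differentiable ℝ (Function.uncurry f)) (u v : ℝ) :
    pu f u v = fderiv ℝ (Function.uncurry f) (u, v) (1, 0) := by
  have h1 : HasFDerivAt (fun x : ℝ => (x, v))
      ((ContinuousLinearMap.id ℝ ℝ).prod (0 : ℝ →L[ℝ] ℝ)) u :=
    HasFDerivAt.prodMk (hasFDerivAt_id u) (hasFDerivAt_const v u)
  have h2 := ((hf (u, v)).hasFDerivAt.comp u h1).hasDerivAt
  have h3 : (fun x : ℝ => f x v) = (Function.uncurry f) ∘ (fun x : ℝ => (x, v)) := rfl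
  simp only [pu]
  rw [h3, h2.deriv]
  simp

lemma pv_eq_fderiv (f : ℝ → ℝ → ℝ) (hf : Differentiable ℝ (Function.uncurry f)) (u v : ℝ) :
    pv f u v = fderiv ℝ (Function.uncurry f) (u, v) (0, 1) := by
  have h1 : HasFDerivAt (fun y : ℝ => (u, y))
      ((0 : ℝ →L[ℝ] ℝ).prod (ContinuousLinearMap.id ℝ ℝ)) v :=
    HasFDerivAt.prodMk (hasFDerivAt_const u v) (hasFDerivAt_id v)
  have h2 := ((hf (u, v)).hasFDerivAt.comp v h1).hasDerivAt
  have h3 : (fun y : ℝ => f u y) = (Function.uncurry f) ∘ (fun y : ℝ => (u, y)) := rfl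
  simp only [pv]
  rw [h3, h2.deriv]
  simp

lemma clairaut (f : ℝ → ℝ → ℝ) (hf : ContDiff ℝ (⊤ : ℕ∞) (Function.uncurry f)) (u v : ℝ) :
    pv (pu f) u v = pu (pv f) u v := by
  set F := Function.uncurry f with hF
  have hdF : Differentiable ℝ F := hf.differentiable (by simp)
  have hdF' : ContDiff ℝ (↑(⊤ : ℕ∞)) (fderiv ℝ F) := (contDiff_infty_iff_fderiv.mp (hf.of_le (by simp))).2
  have hf'' : HasFDerivAt (fderiv ℝ F) (fderiv ℝ (fderiv ℝ F) (u, v)) (u, v) :=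
    (hdF'.differentiable (by simp) (u, v)).hasFDerivAt
  have hsym := second_derivative_symmetric (fun y => (hdF y).hasFDerivAt) hf''
  have e1 : pv (pu f) u v = fderiv ℝ (fderiv ℝ F) (u, v) (0, 1) (1, 0) := by
    have h1 : HasFDerivAt (fun y : ℝ => (u, y))
        ((0 : ℝ →L[ℝ] ℝ).prod (ContinuousLinearMap.id ℝ ℝ)) v :=
      HasFDerivAt.prodMk (hasFDerivAt_const u v) (hasFDerivAt_id v)
    have h2 : HasFDerivAt (fun p : ℝ × ℝ => fderiv ℝ F p (1, 0))
        ((ContinuousLinearMap.apply ℝ ℝ ((1 : ℝ), (0 : ℝ))).comp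
          (fderiv ℝ (fderiv ℝ F) (u, v))) (u, v) :=
      (ContinuousLinearMap.apply ℝ ℝ ((1 : ℝ), (0 : ℝ))).hasFDerivAt.comp (u, v) hf''
    have h3 := (h2.comp v h1).hasDerivAt
    have h4 : pv (pu f) u v = deriv (fun y => fderiv ℝ F (u, y) (1, 0)) v := by
      simp only [pv]
      congr 1
      funext y
      exact pu_eq_fderiv f hdF u y
    have h5 : (fun y : ℝ => fderiv ℝ F (u, y) (1, 0)) =
        (fun p : ℝ × ℝ => fderiv ℝ F p (1, 0)) ∘ (fun y : ℝ => (u, y)) := rfl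
    rw [h4, h5, h3.deriv]
    simp
  have e2 : pu (pv f) u v = fderiv ℝ (fderiv ℝ F) (u, v) (1, 0) (0, 1) := by
    have h1 : HasFDerivAt (fun x : ℝ => (x, v))
        ((ContinuousLinearMap.id ℝ ℝ).prod (0 : ℝ →L[ℝ] ℝ)) u :=
      HasFDerivAt.prodMk (hasFDerivAt_id u) (hasFDerivAt_const v u)
    have h2 : HasFDerivAt (fun p : ℝ × ℝ => fderiv ℝ F p (0, 1))
        ((ContinuousLinearMap.apply ℝ ℝ ((0 : ℝ), (1 : ℝ))).comp
          (fderiv ℝ (fderiv ℝ F) (u, v))) (u, v) :=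
      (ContinuousLinearMap.apply ℝ ℝ ((0 : ℝ), (1 : ℝ))).hasFDerivAt.comp (u, v) hf''
    have h3 := (h2.comp u h1).hasDerivAt
    have h4 : pu (pv f) u v = deriv (fun x => fderiv ℝ F (x, v) (0, 1)) u := by
      simp only [pu]
      congr 1
      funext x
      exact pv_eq_fderiv f hdF x v
    have h5 : (fun x : ℝ => fderiv ℝ F (x, v) (0, 1)) =
        (fun p : ℝ × ℝ => fderiv ℝ F p (0, 1)) ∘ (fun x : ℝ => (x, v)) := rfl
    rw [h4, h5, h3.deriv]
    simp
  rw [e1, e2, hsym]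

/-- Constant-torsion Razzaboni system: with κ = θ_u, λ = -θ_v/2 and
γ = (λ_uu - λ)/κ, the equation κ_v = -2λ_u holds automatically and
γ_u + κλ_u equals -1/2 times ((θ_vuu - θ_v)/θ_u)_u + θ_u θ_vu. -/
theorem razzaboni_sine_gordon_reduction (θ κ lam γ : ℝ → ℝ → ℝ)
    (hθ : ContDiff ℝ (⊤ : ℕ∞) (Function.uncurry θ))
    (hθu : ∀ u v, pu θ u v ≠ 0)
    (hκ : κ = pu θ)
    (hlam : lam = fun u v => -(pv θ u v) / 2)
    (hγ : ∀ u v, γ u v = (pu (pu lam) u v - lam u v) / κ u v) :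
    ∀ u v, pv κ u v = -2 * pu lam u v ∧
      pu γ u v + κ u v * pu lam u v =
        (-(1 : ℝ) / 2) *
          (pu (fun a b => (pu (pu (pv θ)) a b - pv θ a b) / pu θ a b) u v +
            pu θ u v * pu (pv θ) u v) := by
  have hpulam : ∀ a b, pu lam a b = (-(1 : ℝ) / 2) * pu (pv θ) a b := by
    intro a b
    rw [hlam]
    simp only [pu]
    have h : (fun x => -(pv θ x b) / 2) = fun x => (-(1 : ℝ) / 2) * pv θ x b := by
      funext x; ring
    rw [h, deriv_const_mul_field]
  have hpupulam : ∀ a b, pu (pu lam) a b = (-(1 : ℝ) / 2) * pu (pu (pv θ)) a b := by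
    intro a b
    have h : (fun x => pu lam x b) = fun x => (-(1 : ℝ) / 2) * pu (pv θ) x b := by
      funext x; exact hpulam x b
    show deriv (fun x => pu lam x b) a = (-(1 : ℝ) / 2) * pu (pu (pv θ)) a b
    rw [h, deriv_const_mul_field]
    rfl
  have hγ' : ∀ a b, γ a b =
      (-(1 : ℝ) / 2) * ((pu (pu (pv θ)) a b - pv θ a b) / pu θ a b) := by
    intro a b
    rw [hγ a b, hpupulam a b, hκ, hlam]
    ring
  intro u v
  constructor
  · have h1 : pv κ u v = pu (pv θ) u v := by rw [hκ]; exact clairaut θ hθ u v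
    rw [h1, hpulam u v]; ring
  · have h2 : pu γ u v =
        (-(1 : ℝ) / 2) *
          pu (fun a b => (pu (pu (pv θ)) a b - pv θ a b) / pu θ a b) u v := by
      have h : (fun x => γ x v) =
          fun x => (-(1 : ℝ) / 2) * ((pu (pu (pv θ)) x v - pv θ x v) / pu θ x v) := by
        funext x; exact hγ' x v
      show deriv (fun x => γ x v) u = (-(1 : ℝ) / 2) *
          pu (fun a b => (pu (pu (pv θ)) a b - pv θ a b) / pu θ a b) u v
      rw [h, deriv_const_mul_field]
      rfl
    rw [h2, hκ, hpulam u v]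
    ring
end
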